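/- arXiv:1710.00347 — 2 statements merged into one kernel-verified Lean document; each statement's English description precedes it below -/
import Mathlib

section
/- Let $R$ be a local ring with maximal ideal $\mathfrak{m}$ and residue field $k$, let $J \subseteq \mathfrak{m}$ be an ideal, and let $a, b \in R/J^2$ be two elements each generating the ideal $J/J^2$ of $R/J^2$. Let $\mathfrak{p} \supseteq J$ be a prime ideal of $R$ such that $bx = 0$ in $R/J^2$ implies $x \in \mathfrak{p}/J^2$. Then there exists $u \in R/J^2$ with $ua = b$; the image of any such $u$ in $R/\mathfrak{p}$ is a unit; and if $u'a = b$ as well, then $u$ and $u'$ have the same image in $R/\mathfrak{p}$. -/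
/-!
If `a = b * v` and `u * a = b`, then `b * (1 - u * v) = 0`, so the annihilator condition on `b`
kills `1 - u * v` in `R/𝔭`: the image of `u` is inverse to the image of `v`. Since inverses are
unique, every such `u` has the same image, namely the inverse of the image of `v`.
-/

theorem RingHom.map_mul_map_eq_one_of_mul_eq {S T : Type*} [CommRing S] [CommRing T]
    (f : S →+* T) {a b u v : S} (hann : ∀ x, b * x = 0 → f x = 0)
    (hv : a = b * v) (hu : u * a = b) : f u * f v = 1 := by
  have hb : b * (1 - u * v) = 0 := by
    linear_combination (-1 : S) * hu + u * hv
  have h := hann _ hb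
  rw [map_sub, map_one, map_mul, sub_eq_zero] at h
  exact h.symm

/-- In a local ring `R` with ideal `J` contained in the maximal ideal, if `a, b ∈ R/J²` each
generate the ideal `J/J²` and the annihilator of `b` is contained in `𝔭/J²` for a prime
`𝔭 ⊇ J`, then there exists `u` with `ua = b`, the image of any such `u` in `R/𝔭` is a unit,
and any two such `u` have the same image in `R/𝔭`. -/
theorem stmt11 {R : Type*} [CommRing R]
    (J : Ideal R)
    (𝔭 : Ideal R) (hJ𝔭 : J ≤ 𝔭)
    (a b : R ⧸ J ^ 2)
    (ha : Ideal.span {a} = J.map (Ideal.Quotient.mk (J ^ 2)))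
    (hb : Ideal.span {b} = J.map (Ideal.Quotient.mk (J ^ 2)))
    (hann : ∀ x : R ⧸ J ^ 2, b * x = 0 → x ∈ 𝔭.map (Ideal.Quotient.mk (J ^ 2))) :
    (∃ u : R ⧸ J ^ 2, u * a = b) ∧
    (∀ u : R ⧸ J ^ 2, u * a = b →
      IsUnit (Ideal.Quotient.factor (S := J ^ 2) (T := 𝔭)
        (le_trans (Ideal.pow_le_self (by norm_num)) hJ𝔭) u)) ∧
    (∀ u u' : R ⧸ J ^ 2, u * a = b → u' * a = b →
      Ideal.Quotient.factor (S := J ^ 2) (T := 𝔭)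
        (le_trans (Ideal.pow_le_self (by norm_num)) hJ𝔭) u =
      Ideal.Quotient.factor (S := J ^ 2) (T := 𝔭)
        (le_trans (Ideal.pow_le_self (by norm_num)) hJ𝔭) u') := by
  set f := Ideal.Quotient.factor (S := J ^ 2) (T := 𝔭)
    (le_trans (Ideal.pow_le_self (by norm_num)) hJ𝔭)
  have hann_f : ∀ x, b * x = 0 → f x = 0 := fun x hx ↦
    (Ideal.Quotient.factor_ker _).ge (hann x hx)
  obtain ⟨v, hv⟩ : b ∣ a := Ideal.span_singleton_le_span_singleton.mp (hb ▸ ha).le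
  obtain ⟨u₀, hu₀⟩ : a ∣ b := Ideal.span_singleton_le_span_singleton.mp (ha ▸ hb).le
  have hinv : ∀ u, u * a = b → f u * f v = 1 := fun u hu ↦
    f.map_mul_map_eq_one_of_mul_eq hann_f hv hu
  refine ⟨⟨u₀, by rw [hu₀, mul_comm]⟩, fun u hu ↦ .of_mul_eq_one _ (hinv u hu), ?_⟩
  intro u u' hu hu'
  exact left_inv_eq_right_inv (hinv u hu) (mul_comm (f u') (f v) ▸ hinv u' hu')
end

section
/- Let $\Gamma$ be a free $\mathbb{Z}$-module of finite rank, and let $\sigma$ be a rational polyhedral cone in $\Gamma_{\mathbb{R}}$, i.e. $\sigma = \{\sum_i t_i x_i : t_i \geq 0\}$ for finitely many $x_1,\dots,x_k \in \Gamma$. Let $S_\sigma = \{\alpha \in \Gamma^\vee : \langle \alpha, x\rangle \geq 0 \text{ for all } x \in \sigma\}$, where $\Gamma^\vee = \mathrm{Hom}(\Gamma,\mathbb{Z})$. Then $S_\sigma$ is a finitely generated submonoid of $\Gamma^\vee$, and if $\sigma$ spans $\Gamma_{\mathbb{R}}$, then the group of invertible elements of $S_\sigma$ (i.e. $S_\sigma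 \cap (-S_\sigma)$) is trivial. -/
/-!
Membership in `S_σ` only has to be tested on the generators of `σ`, so `S_σ` is the integral
solution monoid `{α | 0 ≤ ⟨α, g_j⟩ for all j}`. Writing `α = p - q` with `p, q ∈ ℕ^d` and recording
the slacks `w_j = ⟨α, g_j⟩ ∈ ℕ`, this monoid is the image of the submonoid of `ℕ^d × ℕ^d × ℕ^k` on
which two additive maps agree, which is finitely generated by Dickson's lemma
(`AddSubmonoid.fg_eqLocusM`). A unit `α` of `S_σ` pairs to zero with all of `σ`, hence with its
span, hence is zero.
-/

section Cone

variable {ι κ R : Type*} [Fintype ι] [Fintype κ]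

theorem forall_mem_cone_nonneg_dotProduct_iff [CommSemiring R] [PartialOrder R] [IsOrderedRing R]
    (y : ι → R) (v : κ → ι → R) :
    (∀ x ∈ {x | ∃ t : κ → R, (∀ j, 0 ≤ t j) ∧ x = ∑ j, t j • v j}, 0 ≤ y ⬝ᵥ x) ↔
      ∀ j, 0 ≤ y ⬝ᵥ v j := by
  classical
  have hcomb : ∀ t : κ → R, y ⬝ᵥ ∑ j, t j • v j = ∑ j, t j * (y ⬝ᵥ v j) := fun t => by
    simp only [dotProduct_sum, dotProduct_smul, smul_eq_mul]
  constructor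
  · intro h j
    simpa [hcomb] using h _ ⟨Pi.single j 1, Pi.le_def.1 (Pi.single_nonneg.2 zero_le_one), rfl⟩
  · rintro h _ ⟨t, ht, rfl⟩
    rw [hcomb]
    exact Finset.sum_nonneg fun j _ => mul_nonneg (ht j) (h j)

theorem eq_zero_of_dotProduct_eq_zero_of_span_eq_top [CommSemiring R]
    {s : Set (ι → R)} (hs : Submodule.span R s = ⊤) {y : ι → R} (hy : ∀ x ∈ s, y ⬝ᵥ x = 0) :
    y = 0 := by
  classical
  have hker : s ⊆ LinearMap.ker (dotProductBilin R R y) := hy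
  have htop := hs ▸ Submodule.span_le.2 hker
  funext i
  simpa [dotProductBilin] using htop (Submodule.mem_top (x := Pi.single i 1))

end Cone

section Gordan

variable {M N : Type*}

def AddMonoidHom.nonnegLocus [AddZeroClass M] [AddCommMonoid N] [PartialOrder N]
    [IsOrderedAddMonoid N] (φ : M →+ N) : AddSubmonoid M where
  carrier := {x | 0 ≤ φ x}
  add_mem' {a b} ha hb := by simpa only [Set.mem_ofPred_eq, map_add] using add_nonneg ha hb
  zero_mem' := by simp

@[simp]
theorem AddMonoidHom.mem_nonnegLocus [AddZeroClass M] [AddCommMonoid N] [PartialOrder N]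
    [IsOrderedAddMonoid N] {φ : M →+ N} {x : M} : x ∈ φ.nonnegLocus ↔ 0 ≤ φ x :=
  Iff.rfl

theorem AddSubmonoid.FG.exists_fin_sum_nsmul [AddCommMonoid M] {P : AddSubmonoid M} (hP : P.FG) :
    ∃ (m : ℕ) (gen : Fin m → M), (∀ j, gen j ∈ P) ∧
      ∀ a ∈ P, ∃ c : Fin m → ℕ, a = ∑ j, c j • gen j := by
  obtain ⟨s, rfl⟩ := hP
  obtain ⟨m, gen, hgen⟩ := s.finite_toSet.fin_embedding
  rw [← hgen]
  exact ⟨m, gen, fun j => AddSubmonoid.subset_closure ⟨j, rfl⟩,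
    fun a ha => AddSubmonoid.mem_closure_range_iff_of_fintype.1 ha⟩

variable {ι κ : Type*} [Finite ι] [Finite κ]

theorem AddMonoidHom.fg_nonnegLocus (φ : (ι → ℤ) →+ (κ → ℤ)) : φ.nonnegLocus.FG := by
  let castι := (Nat.castAddMonoidHom ℤ).compLeft ι
  let castκ := (Nat.castAddMonoidHom ℤ).compLeft κ
  let diff : (ι → ℕ) × (ι → ℕ) × (κ → ℕ) →+ (ι → ℤ) :=
    castι.comp (fst _ _) - castι.comp ((fst _ _).comp (snd _ _))
  let slack : (ι → ℕ) × (ι → ℕ) × (κ → ℕ) →+ (κ → ℤ) := castκ.comp ((snd _ _).comp (snd _ _))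
  suffices h : φ.nonnegLocus = ((φ.comp diff).eqLocusM slack).map diff from
    h ▸ (AddSubmonoid.fg_eqLocusM _ _).map diff
  ext α
  simp only [mem_nonnegLocus, AddSubmonoid.mem_map, AddMonoidHom.mem_eqLocusM]
  constructor
  · intro hα
    let w := ((fun i => (α i).toNat, fun i => (-α i).toNat, fun j => (φ α j).toNat) :
      (ι → ℕ) × (ι → ℕ) × (κ → ℕ))
    have hdiff : diff w = α := funext fun i => by simp [diff, castι, w]
    refine ⟨w, ?_, hdiff⟩
    rw [AddMonoidHom.comp_apply, hdiff]
    funext j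
    simp [slack, castκ, w, Int.toNat_of_nonneg (hα j)]
  · rintro ⟨w, hw, rfl⟩
    rw [AddMonoidHom.comp_apply] at hw
    rw [hw]
    exact fun j => Int.natCast_nonneg _

end Gordan

/-- Gordan's lemma: for a rational polyhedral cone `σ` in `Γ_ℝ` (here `Γ = ℤ^d`), the monoid
`S_σ = {α ∈ Γ^∨ : ⟨α, σ⟩ ≥ 0}` is a finitely generated submonoid of `Γ^∨`, and if `σ` spans
`Γ_ℝ` then `S_σ` has trivial group of invertible elements. -/
theorem stmt15 (d k : ℕ) (g : Fin k → (Fin d → ℤ))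
    (σ : Set (Fin d → ℝ))
    (hσ : σ = {x | ∃ t : Fin k → ℝ, (∀ j, 0 ≤ t j) ∧
      x = ∑ j : Fin k, t j • (fun i => (g j i : ℝ))})
    (S : Set (Fin d → ℤ))
    (hS : S = {α | ∀ x ∈ σ, 0 ≤ ∑ i : Fin d, (α i : ℝ) * x i}) :
    ((0 : Fin d → ℤ) ∈ S) ∧
    (∀ α ∈ S, ∀ β ∈ S, α + β ∈ S) ∧
    (∃ (m : ℕ) (gen : Fin m → (Fin d → ℤ)),
      (∀ j, gen j ∈ S) ∧
      ∀ α ∈ S, ∃ c : Fin m → ℕ, α = ∑ j : Fin m, c j • gen j) ∧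
    (Submodule.span ℝ σ = ⊤ → ∀ α ∈ S, -α ∈ S → α = 0) := by
  let φ := (Matrix.of g).mulVecLin.toAddMonoidHom
  have hSφ : S = φ.nonnegLocus := by
    ext α
    rw [hS, hσ]
    refine (forall_mem_cone_nonneg_dotProduct_iff (fun i => (α i : ℝ)) _).trans ?_
    rw [SetLike.mem_coe, AddMonoidHom.mem_nonnegLocus, Pi.le_def]
    refine forall_congr' fun j => ?_
    rw [show φ α j = α ⬝ᵥ g j from dotProduct_comm (g j) α, Pi.zero_apply,
      ← Int.cast_nonneg_iff (R := ℝ)]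
    simp [dotProduct]
  refine ⟨hSφ ▸ φ.nonnegLocus.zero_mem, hSφ ▸ fun α hα β hβ => φ.nonnegLocus.add_mem hα hβ,
    hSφ ▸ φ.fg_nonnegLocus.exists_fin_sum_nsmul, fun hspan α hα hnα => ?_⟩
  rw [hS] at hα hnα
  have hα0 : (fun i => (α i : ℝ)) = 0 :=
    eq_zero_of_dotProduct_eq_zero_of_span_eq_top hspan fun x hx =>
      le_antisymm (by simpa [dotProduct] using hnα x hx) (hα x hx)
  exact funext fun i => by simpa using congrFun hα0 i
end
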